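/- arXiv:2006.09946 — 2 statements merged into one kernel-verified Lean document; each statement's English description precedes it below -/
import Mathlib

section
/- Let M, L ∈ ℝ^{d×d} be symmetric with L − M positive semidefinite and M + L invertible. Let D be the Moore–Penrose pseudoinverse of L − M, let Π := I_d − D(L − M), let r > 0, and set P := (L + M)(D + rΠ)(L + M). Then for every f ∈ S(M,L), the map φ(z) := z − 2(M + L)⁻¹∇f(z) satisfies (φ(z₁) − φ(z₂))ᵀP(φ(z₁) − φ(z₂)) ≤ (z₁ − z₂)ᵀ(L − M)(z₁ − z₂) for all z₁, z₂ ∈ ℝ^d. -/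
/-!
Subtracting `½ zᵀMz` turns `f ∈ S(M, L)` into a function in `S(0, Q)`, `Q = L - M`, with
gradient `g = ∇f - M`. Such a function is affine along `ker Q`, so `s = g z₁ - g z₂` is
orthogonal to `ker Q`, i.e. `DQ s = s`; and testing its two quadratic bounds at the point
`z₁ - D s` gives the co-coercivity `sᵀDs ≤ (z₁ - z₂)ᵀs`. Now
`(L + M)(φ z₁ - φ z₂) = Q(z₁ - z₂) - 2s` lies in the range of `Q`, where `Π` vanishes, and its
`D`-energy is `(z₁ - z₂)ᵀQ(z₁ - z₂) - 4((z₁ - z₂)ᵀs - sᵀDs)`.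
-/

open Matrix

/-- Gradient of `f : ℝ^ι → ℝ` in coordinates. -/
noncomputable def grad {ι : Type*} [Fintype ι] [DecidableEq ι]
    (f : (ι → ℝ) → ℝ) (z : ι → ℝ) : ι → ℝ :=
  fun i => fderiv ℝ f z (Pi.single i 1)

/-- The class `S(M,L)` of continuously differentiable functions sandwiched between the
quadratics induced by `M` and `L`. -/
def SClass {ι : Type*} [Fintype ι] [DecidableEq ι]
    (M L : Matrix ι ι ℝ) (f : (ι → ℝ) → ℝ) : Prop :=
  ContDiff ℝ 1 f ∧ ∀ z₁ z₂ : ι → ℝ,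
    (1/2) * ((z₂ - z₁) ⬝ᵥ M.mulVec (z₂ - z₁)) ≤ f z₂ - f z₁ - grad f z₁ ⬝ᵥ (z₂ - z₁) ∧
    f z₂ - f z₁ - grad f z₁ ⬝ᵥ (z₂ - z₁) ≤ (1/2) * ((z₂ - z₁) ⬝ᵥ L.mulVec (z₂ - z₁))

/-- `D` is the Moore–Penrose pseudoinverse of `Q`. -/
def IsMoorePenrose {d : ℕ} (Q D : Matrix (Fin d) (Fin d) ℝ) : Prop :=
  Q * D * Q = Q ∧ D * Q * D = D ∧ (Q * D)ᵀ = Q * D ∧ (D * Q)ᵀ = D * Q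

section

variable {ι : Type*} [Fintype ι]

lemma Matrix.IsSymm.dotProduct_mulVec_comm {Q : Matrix ι ι ℝ} (hQ : Q.IsSymm) (x y : ι → ℝ) :
    x ⬝ᵥ Q *ᵥ y = y ⬝ᵥ Q *ᵥ x := by
  simpa only [hQ.eq] using dotProduct_transpose_mulVec Q x y

lemma Matrix.IsSymm.dotProduct_mul_mul_mulVec {S : Matrix ι ι ℝ} (hS : S.IsSymm)
    (A : Matrix ι ι ℝ) (x : ι → ℝ) : x ⬝ᵥ (S * A * S) *ᵥ x = (S *ᵥ x) ⬝ᵥ A *ᵥ (S *ᵥ x) := by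
  rw [← mulVec_mulVec, ← mulVec_mulVec, hS.dotProduct_mulVec_comm, dotProduct_comm]

def bregman (f : (ι → ℝ) → ℝ) (g : (ι → ℝ) → ι → ℝ) (x y : ι → ℝ) : ℝ :=
  f y - f x - g x ⬝ᵥ (y - x)

/-- `f ∈ S(0, Q)`, with `g` in the role of `∇f`. -/
def BregmanSandwich (Q : Matrix ι ι ℝ) (f : (ι → ℝ) → ℝ) (g : (ι → ℝ) → ι → ℝ) : Prop :=
  ∀ x y, 0 ≤ bregman f g x y ∧ bregman f g x y ≤ (1 / 2) * ((y - x) ⬝ᵥ Q *ᵥ (y - x))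

lemma bregman_add_bregman (f : (ι → ℝ) → ℝ) (g : (ι → ℝ) → ι → ℝ) (x y : ι → ℝ) :
    bregman f g x y + bregman f g y x = (g y - g x) ⬝ᵥ (y - x) := by
  simp only [bregman, sub_dotProduct, dotProduct_sub]
  ring

lemma bregman_sub_quadratic {M : Matrix ι ι ℝ} (hM : M.IsSymm) (f : (ι → ℝ) → ℝ)
    (g : (ι → ℝ) → ι → ℝ) (x y : ι → ℝ) :
    bregman (fun z => f z - (1 / 2) * (z ⬝ᵥ M *ᵥ z)) (fun z => g z - M *ᵥ z) x y =
      bregman f g x y - (1 / 2) * ((y - x) ⬝ᵥ M *ᵥ (y - x)) := by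
  simp only [bregman, mulVec_sub, sub_dotProduct, dotProduct_sub, dotProduct_comm (M *ᵥ x),
    hM.dotProduct_mulVec_comm x y]
  ring

lemma SClass.bregmanSandwich {M L : Matrix ι ι ℝ} [DecidableEq ι] {f : (ι → ℝ) → ℝ}
    (hM : M.IsSymm) (hf : SClass M L f) :
    BregmanSandwich (L - M) (fun z => f z - (1 / 2) * (z ⬝ᵥ M *ᵥ z))
      (fun z => grad f z - M *ᵥ z) := by
  intro x y
  obtain ⟨hlow, hup⟩ := hf.2 x y
  rw [bregman_sub_quadratic hM, sub_mulVec, dotProduct_sub]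
  exact ⟨by unfold bregman; linarith, by unfold bregman; linarith⟩

end

namespace IsMoorePenrose

variable {d : ℕ} {Q D : Matrix (Fin d) (Fin d) ℝ}

lemma transpose (h : IsMoorePenrose Q D) : IsMoorePenrose Qᵀ Dᵀ := by
  obtain ⟨h₁, h₂, h₃, h₄⟩ := h
  refine ⟨?_, ?_, ?_, ?_⟩
  · rw [← transpose_mul, ← transpose_mul, ← Matrix.mul_assoc, h₁]
  · rw [← transpose_mul, ← transpose_mul, ← Matrix.mul_assoc, h₂]
  · rw [← transpose_mul, transpose_transpose, h₄]
  · rw [← transpose_mul, transpose_transpose, h₃]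

lemma unique {D' : Matrix (Fin d) (Fin d) ℝ} (h : IsMoorePenrose Q D)
    (h' : IsMoorePenrose Q D') : D = D' := by
  obtain ⟨a, b, c, e⟩ := h
  obtain ⟨a', b', c', e'⟩ := h'
  have hQD : Q * D = Q * D' := by
    calc Q * D = (Q * D') * (Q * D) := by rw [← Matrix.mul_assoc, a']
    _ = (Q * D * (Q * D'))ᵀ := by rw [transpose_mul, c, c']
    _ = Q * D' := by rw [← Matrix.mul_assoc, a, c']
  have hDQ : D * Q = D' * Q := by
    calc D * Q = (D * Q) * (D' * Q) := by rw [Matrix.mul_assoc, ← Matrix.mul_assoc Q, a']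
    _ = (D' * Q * (D * Q))ᵀ := by rw [transpose_mul, e, e']
    _ = D' * Q := by rw [Matrix.mul_assoc, ← Matrix.mul_assoc Q, a, e']
  calc D = D * (Q * D') := by rw [← hQD, ← Matrix.mul_assoc, b]
  _ = D' := by rw [← Matrix.mul_assoc, hDQ, b']

lemma isSymm (hQ : Q.IsSymm) (h : IsMoorePenrose Q D) : D.IsSymm :=
  (hQ.eq ▸ h.transpose).unique h

lemma mul_comm (hQ : Q.IsSymm) (h : IsMoorePenrose Q D) : D * Q = Q * D := by
  rw [← h.2.2.2, transpose_mul, hQ.eq, (h.isSymm hQ).eq]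

lemma mul_one_sub (h : IsMoorePenrose Q D) : Q * (1 - D * Q) = 0 := by
  rw [Matrix.mul_sub, Matrix.mul_one, ← Matrix.mul_assoc, h.1, sub_self]

lemma one_sub_mul (hQ : Q.IsSymm) (h : IsMoorePenrose Q D) : (1 - D * Q) * Q = 0 := by
  rw [Matrix.sub_mul, Matrix.one_mul, h.mul_comm hQ, h.1, sub_self]

/-- `D * Q` is the orthogonal projection onto `(ker Q)ᗮ`. -/
lemma mul_mulVec_eq_self (h : IsMoorePenrose Q D) {s : Fin d → ℝ}
    (hs : ∀ v, Q *ᵥ v = 0 → s ⬝ᵥ v = 0) : (D * Q) *ᵥ s = s := by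
  set p := (1 - D * Q) *ᵥ s with hp
  have hQp : Q *ᵥ p = 0 := by rw [hp, mulVec_mulVec, h.mul_one_sub, zero_mulVec]
  have hpp : p ⬝ᵥ p = 0 := by
    calc p ⬝ᵥ p = p ⬝ᵥ s - s ⬝ᵥ (D * Q)ᵀ *ᵥ p := by
          rw [dotProduct_transpose_mulVec, ← dotProduct_sub, hp, sub_mulVec, one_mulVec]
    _ = 0 := by
          rw [h.2.2.2, ← mulVec_mulVec, hQp, mulVec_zero, dotProduct_zero, dotProduct_comm,
            hs p hQp, sub_zero]
  have hp0 := dotProduct_self_eq_zero.mp hpp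
  rw [hp, sub_mulVec, one_mulVec, sub_eq_zero] at hp0
  exact hp0.symm

end IsMoorePenrose

namespace BregmanSandwich

section

variable {ι : Type*} [Fintype ι] {Q : Matrix ι ι ℝ} {f : (ι → ℝ) → ℝ} {g : (ι → ℝ) → ι → ℝ}

lemma sub_dotProduct_eq_zero (hQ : Q.IsSymm) (hB : BregmanSandwich Q f g) (a b : ι → ℝ)
    {v : ι → ℝ} (hv : Q *ᵥ v = 0) : (g a - g b) ⬝ᵥ v = 0 := by
  -- `f` is affine along `ker Q`, so moving `a` along `v` leaves the upper bound at `b` unchanged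
  have hbound : ∀ t : ℝ, t * ((g a - g b) ⬝ᵥ v) ≤
      (1 / 2) * ((a - b) ⬝ᵥ Q *ᵥ (a - b)) - bregman f g b a := by
    intro t
    have hup := (hB b (a + t • v)).2
    have hlow := (hB a (a + t • v)).1
    have hq : (a - b + t • v) ⬝ᵥ Q *ᵥ (a - b + t • v) = (a - b) ⬝ᵥ Q *ᵥ (a - b) := by
      rw [mulVec_add, mulVec_smul, hv, smul_zero, add_zero, add_dotProduct, smul_dotProduct,
        hQ.dotProduct_mulVec_comm v, hv, dotProduct_zero, smul_zero, add_zero]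
    unfold bregman at hup hlow ⊢
    rw [add_sub_right_comm, hq, dotProduct_add, dotProduct_smul, smul_eq_mul] at hup
    rw [add_sub_cancel_left, dotProduct_smul, smul_eq_mul] at hlow
    rw [sub_dotProduct]
    linarith
  by_contra hne
  have := hbound (((1 / 2) * ((a - b) ⬝ᵥ Q *ᵥ (a - b)) - bregman f g b a + 1) /
    ((g a - g b) ⬝ᵥ v))
  rw [div_mul_cancel₀ _ hne] at this
  linarith

end

variable {d : ℕ} {Q D : Matrix (Fin d) (Fin d) ℝ} {f : (Fin d → ℝ) → ℝ}
  {g : (Fin d → ℝ) → Fin d → ℝ}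

lemma half_dotProduct_pinv_le_bregman (hQ : Q.IsSymm) (hD : IsMoorePenrose Q D)
    (hB : BregmanSandwich Q f g) (a b : Fin d → ℝ) :
    (1 / 2) * ((g a - g b) ⬝ᵥ D *ᵥ (g a - g b)) ≤ bregman f g b a := by
  set s := g a - g b
  set t := D *ᵥ s
  have hup := (hB a (a - t)).2
  have hlow := (hB b (a - t)).1
  have htQt : t ⬝ᵥ Q *ᵥ t = s ⬝ᵥ t := by
    rw [dotProduct_comm, ← dotProduct_transpose_mulVec, (hD.isSymm hQ).eq, mulVec_mulVec,
      mulVec_mulVec, hD.2.1]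
  simp only [bregman, sub_sub_cancel_left, sub_right_comm a t b, mulVec_neg, dotProduct_neg,
    neg_dotProduct, neg_neg, dotProduct_sub, htQt] at hup hlow ⊢
  have hst : s ⬝ᵥ t = g a ⬝ᵥ t - g b ⬝ᵥ t := sub_dotProduct _ _ _
  linarith

lemma dotProduct_pinv_le (hQ : Q.IsSymm) (hD : IsMoorePenrose Q D)
    (hB : BregmanSandwich Q f g) (a b : Fin d → ℝ) :
    (g a - g b) ⬝ᵥ D *ᵥ (g a - g b) ≤ (a - b) ⬝ᵥ (g a - g b) := by
  have hab := hB.half_dotProduct_pinv_le_bregman hQ hD a b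
  have hba := hB.half_dotProduct_pinv_le_bregman hQ hD b a
  rw [← neg_sub (g a), mulVec_neg, dotProduct_neg, neg_dotProduct, neg_neg] at hba
  have hsum := bregman_add_bregman f g b a
  rw [dotProduct_comm] at hsum
  linarith

end BregmanSandwich

lemma IsMoorePenrose.dotProduct_add_smul_one_sub_le {d : ℕ} {Q D : Matrix (Fin d) (Fin d) ℝ}
    (hQ : Q.IsSymm) (hD : IsMoorePenrose Q D) (r : ℝ) {x s : Fin d → ℝ}
    (hs : (D * Q) *ᵥ s = s) (hsx : s ⬝ᵥ D *ᵥ s ≤ x ⬝ᵥ s) :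
    (Q *ᵥ x - (2 : ℝ) • s) ⬝ᵥ (D + r • (1 - D * Q)) *ᵥ (Q *ᵥ x - (2 : ℝ) • s) ≤
      x ⬝ᵥ Q *ᵥ x := by
  have hproj : (1 - D * Q) *ᵥ (Q *ᵥ x - (2 : ℝ) • s) = 0 := by
    rw [mulVec_sub, mulVec_mulVec, hD.one_sub_mul hQ, zero_mulVec, mulVec_smul, sub_mulVec,
      one_mulVec, hs, sub_self, smul_zero, sub_zero]
  have hxx : (Q *ᵥ x) ⬝ᵥ D *ᵥ (Q *ᵥ x) = x ⬝ᵥ Q *ᵥ x := by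
    rw [dotProduct_comm, ← dotProduct_transpose_mulVec, hQ.eq, mulVec_mulVec, mulVec_mulVec,
      hD.1]
  have hxs : (Q *ᵥ x) ⬝ᵥ D *ᵥ s = x ⬝ᵥ s := by
    rw [dotProduct_comm, ← dotProduct_transpose_mulVec, hQ.eq, mulVec_mulVec,
      ← hD.mul_comm hQ, hs]
  have hsx' : s ⬝ᵥ D *ᵥ (Q *ᵥ x) = x ⬝ᵥ s := by
    rw [(hD.isSymm hQ).dotProduct_mulVec_comm, hxs]
  rw [add_mulVec, dotProduct_add, smul_mulVec, hproj, smul_zero, dotProduct_zero, add_zero]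
  simp only [mulVec_sub, mulVec_smul, dotProduct_sub, sub_dotProduct, dotProduct_smul,
    smul_dotProduct, smul_eq_mul, hxx, hxs, hsx']
  linarith

theorem stmt_8_general {d : ℕ} (M L D : Matrix (Fin d) (Fin d) ℝ)
    (hM : M.IsSymm) (hL : L.IsSymm)
    (hMLinv : IsUnit (M + L)) (hD : IsMoorePenrose (L - M) D)
    (Pi0 : Matrix (Fin d) (Fin d) ℝ) (hPi0 : Pi0 = 1 - D * (L - M))
    (r : ℝ)
    (P : Matrix (Fin d) (Fin d) ℝ) (hP : P = (L + M) * (D + r • Pi0) * (L + M))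
    (f : (Fin d → ℝ) → ℝ) (hf : SClass M L f)
    (φ : (Fin d → ℝ) → (Fin d → ℝ))
    (hφ : ∀ z, φ z = z - (2 : ℝ) • (M + L)⁻¹.mulVec (grad f z)) :
    ∀ z₁ z₂ : Fin d → ℝ,
      (φ z₁ - φ z₂) ⬝ᵥ P.mulVec (φ z₁ - φ z₂)
        ≤ (z₁ - z₂) ⬝ᵥ (L - M).mulVec (z₁ - z₂) := by
  intro z₁ z₂
  have hQ : (L - M).IsSymm := hL.sub hM
  have hB := hf.bregmanSandwich hM
  have hinv : (L + M) * (M + L)⁻¹ = 1 := by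
    rw [add_comm L, mul_nonsing_inv _ ((isUnit_iff_isUnit_det _).mp hMLinv)]
  have hw : (L + M) *ᵥ (φ z₁ - φ z₂) = (L - M) *ᵥ (z₁ - z₂) -
      (2 : ℝ) • ((grad f z₁ - M *ᵥ z₁) - (grad f z₂ - M *ᵥ z₂)) := by
    simp only [hφ, mulVec_sub, mulVec_smul, mulVec_mulVec, hinv, one_mulVec, add_mulVec,
      sub_mulVec]
    module
  rw [hP, hPi0, (hL.add hM).dotProduct_mul_mul_mulVec, hw]
  exact hD.dotProduct_add_smul_one_sub_le hQ r
    (hD.mul_mulVec_eq_self fun v hv => hB.sub_dotProduct_eq_zero hQ z₁ z₂ hv)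
    (hB.dotProduct_pinv_le hQ hD z₁ z₂)

theorem stmt_8 {d : ℕ} (M L D : Matrix (Fin d) (Fin d) ℝ)
    (hM : M.IsSymm) (hL : L.IsSymm) (hLM : (L - M).PosSemidef)
    (hMLinv : IsUnit (M + L)) (hD : IsMoorePenrose (L - M) D)
    (Pi0 : Matrix (Fin d) (Fin d) ℝ) (hPi0 : Pi0 = 1 - D * (L - M))
    (r : ℝ) (hr : 0 < r)
    (P : Matrix (Fin d) (Fin d) ℝ) (hP : P = (L + M) * (D + r • Pi0) * (L + M))
    (f : (Fin d → ℝ) → ℝ) (hf : SClass M L f)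
    (φ : (Fin d → ℝ) → (Fin d → ℝ))
    (hφ : ∀ z, φ z = z - (2 : ℝ) • (M + L)⁻¹.mulVec (grad f z)) :
    ∀ z₁ z₂ : Fin d → ℝ,
      (φ z₁ - φ z₂) ⬝ᵥ P.mulVec (φ z₁ - φ z₂)
        ≤ (z₁ - z₂) ⬝ᵥ (L - M).mulVec (z₁ - z₂) :=
  stmt_8_general M L D hM hL hMLinv hD Pi0 hPi0 r P hP f hf φ hφ
end

section
/- Let M, L ∈ ℝ^{d×d} be symmetric invertible matrices with L − M positive semidefinite such that M and L are congruent. Then M + L is invertible, and for every ρ ∈ ℝ with max{|λ| : λ a complex eigenvalue of (M + L)⁻¹(L − M)} < ρ there exists a symmetric positive definite matrix P ∈ ℝ^{d×d} such that for every f ∈ S(M,L) the map φ(z) := z − 2(M + L)⁻¹∇f(z) satisfies (φ(z₁) − φ(z₂))ᵀP(φ(z₁) − φ(z₂)) ≤ ρ² (z₁ − z₂)ᵀP(z₁ − z₂) for all z₁, z₂ ∈ ℝ^d. -/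
open Matrix

/-- Two real symmetric matrices are congruent if `Tᵀ M T = L` for some invertible `T`. -/
def CongruentMat {d : ℕ} (M L : Matrix (Fin d) (Fin d) ℝ) : Prop :=
  ∃ T : Matrix (Fin d) (Fin d) ℝ, IsUnit T ∧ Tᵀ * M * T = L

/-!
Write `K = M + L` and `N = L - M ⪰ 0`.

If `K v = 0` with `v ≠ 0`, then `vᵀLv = -vᵀMv > 0`, and adjoining `v` to any subspace on which
`M` is positive definite gives a subspace of one more dimension on which `L` is positive definite.
Transporting back along the congruence, `M` would be positive definite on subspaces of every
dimension; hence `K` is invertible.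

For `f ∈ S(M,L)`, `u = z₁ - z₂` and `w = ∇f(z₁) - ∇f(z₂) - M u`, the defining inequalities at
four points give `2 w ⬝ s - sᵀNs ≤ w ⬝ u` for all `s`. Hence `w = N a` with `aᵀNa ≤ aᵀNu`, and
`φ(z₁) - φ(z₂) = K⁻¹N(u - 2a)`. Take `P = K Q K` with `Q = N⁺ + ε Π`, where `N⁺` is the
pseudo-inverse and `Π` the projection onto `ker N`. Then `NQN = N` gives
`‖φ(z₁) - φ(z₂)‖²_P = (u - 2a)ᵀN(u - 2a) ≤ uᵀNu`. Moreover `uᵀNu ≤ ρ² uᵀPu` amounts to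
`K⁻¹NK⁻¹ ≤ ρ² Q`. This follows, for `ε` large, by splitting `N^{1/2}K⁻¹` along the range and
kernel of `N`: the symmetric matrix `N^{1/2}K⁻¹N^{1/2}` has the same spectrum as `K⁻¹N`.
-/

open scoped MatrixOrder

lemma star_add_mul_add_le {A : Type*} [Ring A] [StarRing A] [PartialOrder A] [StarOrderedRing A]
    [Algebra ℝ A] [StarModule ℝ A] [PosSMulMono ℝ A] {δ : ℝ} (hδ : 0 < δ) (y z : A) :
    star (y + z) * (y + z) ≤ (1 + δ) • (star y * y) + (1 + δ⁻¹) • (star z * z) := by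
  have key : (1 + δ) • (star y * y) + (1 + δ⁻¹) • (star z * z) - star (y + z) * (y + z) =
      δ⁻¹ • (star (δ • y - z) * (δ • y - z)) := by
    simp only [star_add, star_sub, star_smul, star_trivial, add_mul, mul_add, sub_mul, mul_sub,
      smul_mul_assoc, mul_smul_comm, smul_smul, smul_sub]
    match_scalars <;> field_simp <;> ring
  exact sub_nonneg.1 (key ▸ smul_nonneg (inv_nonneg.2 hδ.le) (star_mul_self_nonneg _))

lemma mul_self_le_algebraMap_of_abs_le {A : Type*} [Ring A] [StarRing A] [TopologicalSpace A]
    [Algebra ℝ A] [ContinuousFunctionalCalculus ℝ A IsSelfAdjoint] [PartialOrder A]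
    [StarOrderedRing A] [NonnegSpectrumClass ℝ A] {a : A} (ha : IsSelfAdjoint a) {r : ℝ}
    (h : ∀ t ∈ spectrum ℝ a, |t| ≤ r) : a * a ≤ algebraMap ℝ A (r ^ 2) := by
  calc a * a = cfc (fun t : ℝ => t * t) a := by rw [cfc_mul _ _ a, cfc_id' ℝ a]
    _ ≤ algebraMap ℝ A (r ^ 2) := (cfc_le_algebraMap_iff _ _ a).2 fun t ht => by
      rw [← abs_mul_abs_self, sq]
      exact mul_self_le_mul_self (abs_nonneg t) (h t ht)

lemma exists_pos_one_add_mul_sq_le {r ρ : ℝ} (hr : 0 ≤ r) (hrρ : r < ρ) :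
    ∃ δ : ℝ, 0 < δ ∧ (1 + δ) * r ^ 2 ≤ ρ ^ 2 := by
  have hρ : 0 < ρ := hr.trans_lt hrρ
  have hr2 : r ^ 2 < ρ ^ 2 := by nlinarith
  refine ⟨(ρ ^ 2 - r ^ 2) / ρ ^ 2, div_pos (by linarith) (by positivity), ?_⟩
  rw [add_mul, one_mul, div_mul_eq_mul_div, ← le_sub_iff_add_le', div_le_iff₀ (by positivity)]
  nlinarith

namespace Matrix

variable {n : Type*} [Fintype n]

lemma dotProduct_transpose_mul_mul_mulVec {R m : Type*} [CommSemiring R] [Fintype m]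
    (A : Matrix m m R) (T : Matrix m n R) (x : n → R) :
    x ⬝ᵥ (Tᵀ * A * T) *ᵥ x = (T *ᵥ x) ⬝ᵥ A *ᵥ (T *ᵥ x) := by
  rw [← mulVec_mulVec, ← mulVec_mulVec, dotProduct_mulVec x Tᵀ, vecMul_transpose]

lemma IsSymm.dotProduct_mulVec_comm_s10 {R : Type*} [CommSemiring R] {A : Matrix n n R}
    (hA : A.IsSymm) (x y : n → R) : x ⬝ᵥ A *ᵥ y = y ⬝ᵥ A *ᵥ x := by
  rw [← dotProduct_transpose_mulVec, hA.eq]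

lemma IsSymm.dotProduct_mulVec_sub_two_smul_le {N : Matrix n n ℝ} (hN : N.IsSymm) {u a : n → ℝ}
    (ha : a ⬝ᵥ N *ᵥ a ≤ u ⬝ᵥ N *ᵥ a) :
    (u - (2 : ℝ) • a) ⬝ᵥ N *ᵥ (u - (2 : ℝ) • a) ≤ u ⬝ᵥ N *ᵥ u := by
  have := hN.dotProduct_mulVec_comm_s10 u a
  simp only [mulVec_sub, mulVec_smul, dotProduct_sub, sub_dotProduct, dotProduct_smul,
    smul_dotProduct, smul_eq_mul]
  linarith

lemma dotProduct_mulVec_le_of_le {A B : Matrix n n ℝ} (h : A ≤ B) (x : n → ℝ) :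
    x ⬝ᵥ A *ᵥ x ≤ x ⬝ᵥ B *ᵥ x := by
  have := (le_iff.1 h).dotProduct_mulVec_nonneg x
  rwa [star_trivial, sub_mulVec, dotProduct_sub, sub_nonneg] at this

def IsPosOn (A : Matrix n n ℝ) (W : Submodule ℝ (n → ℝ)) : Prop :=
  ∀ x ∈ W, x ≠ 0 → 0 < x ⬝ᵥ A *ᵥ x

lemma isPosOn_bot (A : Matrix n n ℝ) : IsPosOn A ⊥ :=
  fun _ hx hx0 => absurd ((Submodule.mem_bot ℝ).1 hx) hx0

lemma IsPosOn.map {A T : Matrix n n ℝ} {W : Submodule ℝ (n → ℝ)} (hW : IsPosOn (Tᵀ * A * T) W) :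
    IsPosOn A (W.map T.mulVecLin) := by
  rintro _ ⟨x, hx, rfl⟩ hx0
  have hx0' : x ≠ 0 := by rintro rfl; simp at hx0
  simpa [dotProduct_transpose_mul_mul_mulVec] using hW x hx hx0'

/-- With `c = vᵀLv` and `a = vᵀLw`, the vector `c • w - a • v` is `L`-orthogonal to `v`. -/
lemma sq_mul_dotProduct_mulVec_add_smul {M L : Matrix n n ℝ} (hM : M.IsSymm) (hL : L.IsSymm)
    {v w : n → ℝ} (hMv : M *ᵥ v = -(L *ᵥ v)) {c a : ℝ} (hc : v ⬝ᵥ L *ᵥ v = c)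
    (ha : v ⬝ᵥ L *ᵥ w = a) (t : ℝ) :
    c ^ 2 * ((w + t • v) ⬝ᵥ L *ᵥ (w + t • v)) =
      (c • w - a • v) ⬝ᵥ (L - M) *ᵥ (c • w - a • v) + c ^ 2 * (w ⬝ᵥ M *ᵥ w) + c * a ^ 2 +
        c * (a + t * c) ^ 2 := by
  subst hc ha
  have hwMv : w ⬝ᵥ M *ᵥ v = -(v ⬝ᵥ L *ᵥ w) := by
    rw [hMv, dotProduct_neg, hL.dotProduct_mulVec_comm_s10]
  have hvMw := hM.dotProduct_mulVec_comm_s10 v w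
  have hwLv := hL.dotProduct_mulVec_comm_s10 w v
  have hvMv : v ⬝ᵥ M *ᵥ v = -(v ⬝ᵥ L *ᵥ v) := by rw [hMv, dotProduct_neg]
  simp only [mulVec_add, mulVec_sub, mulVec_smul, sub_mulVec, dotProduct_add, add_dotProduct,
    dotProduct_sub, sub_dotProduct, dotProduct_smul, smul_dotProduct, smul_eq_mul]
  rw [hvMw, hwMv, hwLv, hvMv]
  ring

lemma IsPosOn.sup_span_singleton {M L : Matrix n n ℝ} (hM : M.IsSymm) (hL : L.IsSymm)
    (hLM : (L - M).PosSemidef) {v : n → ℝ} (hKv : (M + L) *ᵥ v = 0) (hc : 0 < v ⬝ᵥ L *ᵥ v)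
    {W : Submodule ℝ (n → ℝ)} (hW : IsPosOn M W) : IsPosOn L (W ⊔ Submodule.span ℝ {v}) := by
  rintro x hx hx0
  obtain ⟨w, hwW, _, hz, rfl⟩ := Submodule.mem_sup.1 hx
  obtain ⟨t, rfl⟩ := Submodule.mem_span_singleton.1 hz
  set c := v ⬝ᵥ L *ᵥ v
  set a := v ⬝ᵥ L *ᵥ w
  have key := sq_mul_dotProduct_mulVec_add_smul (w := w) hM hL
    (eq_neg_of_add_eq_zero_left (by rwa [← add_mulVec])) rfl rfl t
  have hN : 0 ≤ (c • w - a • v) ⬝ᵥ (L - M) *ᵥ (c • w - a • v) := by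
    simpa using hLM.dotProduct_mulVec_nonneg (c • w - a • v)
  have hpos : 0 < c ^ 2 * (w ⬝ᵥ M *ᵥ w) + c * (a + t * c) ^ 2 := by
    rcases eq_or_ne w 0 with rfl | hw
    · have ht : t ≠ 0 := by rintro rfl; simp at hx0
      simp only [a, mulVec_zero, dotProduct_zero, mul_zero, zero_add]
      positivity
    · have := hW w hwW hw
      positivity
  have : 0 ≤ c * a ^ 2 := by positivity
  exact pos_of_mul_pos_right (key ▸ by linarith) (sq_nonneg c)

variable [DecidableEq n]

lemma dotProduct_mulVec_pos_of_add_mulVec_eq_zero {M L : Matrix n n ℝ} (hLinv : IsUnit L)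
    (hLM : (L - M).PosSemidef) {v : n → ℝ} (hv : v ≠ 0) (hKv : (M + L) *ᵥ v = 0) :
    0 < v ⬝ᵥ L *ᵥ v := by
  have hMv : M *ᵥ v = -(L *ᵥ v) := eq_neg_of_add_eq_zero_left (by rwa [← add_mulVec])
  have hNv : v ⬝ᵥ (L - M) *ᵥ v = 2 * (v ⬝ᵥ L *ᵥ v) := by
    rw [sub_mulVec, hMv, dotProduct_sub, dotProduct_neg]; ring
  have hNv_nonneg : 0 ≤ v ⬝ᵥ (L - M) *ᵥ v := by simpa using hLM.dotProduct_mulVec_nonneg v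
  refine lt_of_le_of_ne (by linarith) fun hc => hv ?_
  have hNv0 : (L - M) *ᵥ v = 0 := by
    rw [← hLM.dotProduct_mulVec_zero_iff]; simpa [hNv] using hc.symm
  have hLv : L *ᵥ v = 0 := by
    rw [sub_mulVec, hMv, sub_neg_eq_add, ← two_smul ℝ] at hNv0
    exact (smul_eq_zero.1 hNv0).resolve_left two_ne_zero
  exact mulVec_injective_iff_isUnit.2 hLinv (hLv.trans (mulVec_zero L).symm)

theorem isUnit_add_of_congruent {M L T : Matrix n n ℝ} (hM : M.IsSymm) (hL : L.IsSymm)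
    (hLinv : IsUnit L) (hLM : (L - M).PosSemidef) (hT : Function.Injective T.mulVec)
    (hTML : Tᵀ * M * T = L) : IsUnit (M + L) := by
  by_contra hK
  obtain ⟨v, hv, hKv⟩ := exists_mulVec_eq_zero_iff.2
    (by rwa [isUnit_iff_isUnit_det, isUnit_iff_ne_zero, not_not] at hK)
  have hc := dotProduct_mulVec_pos_of_add_mulVec_eq_zero hLinv hLM hv hKv
  have hvM : v ⬝ᵥ M *ᵥ v < 0 := by
    rw [eq_neg_of_add_eq_zero_left (by rwa [← add_mulVec] : M *ᵥ v + L *ᵥ v = 0), dotProduct_neg]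
    linarith
  have hdim : ∀ k, ∃ W, IsPosOn M W ∧ Module.finrank ℝ W = k := by
    intro k
    induction k with
    | zero => exact ⟨⊥, isPosOn_bot M, finrank_bot ℝ _⟩
    | succ k ih =>
      obtain ⟨W, hW, rfl⟩ := ih
      have hvW : v ∉ W := fun hvW => (hW v hvW hv).not_gt hvM
      refine ⟨_, (hTML ▸ hW.sup_span_singleton hM hL hLM hKv hc).map, ?_⟩
      rw [← Submodule.finrank_sup_span_singleton hvW]
      exact (Submodule.equivMapOfInjective _ hT _).finrank_eq.symm
  obtain ⟨W, -, hW⟩ := hdim (Fintype.card n + 1)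
  have := W.finrank_le
  rw [Module.finrank_fintype_fun_eq_card] at this
  omega

lemma spectrum_mul_comm {K : Type*} [Field K] (A B : Matrix n n K) :
    spectrum K (A * B) = spectrum K (B * A) := by
  ext t
  simp only [mem_spectrum_iff_isRoot_charpoly, charpoly_mul_comm]

lemma ofReal_mem_spectrum_map {A : Matrix n n ℝ} {t : ℝ} (ht : t ∈ spectrum ℝ A) :
    (t : ℂ) ∈ spectrum ℂ (A.map Complex.ofReal) := by
  rw [mem_spectrum_iff_isRoot_charpoly] at ht ⊢
  exact charpoly_map A Complex.ofRealHom ▸ ht.map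

lemma continuousOn_spectrum (A : Matrix n n ℝ) (f : ℝ → ℝ) : ContinuousOn f (spectrum ℝ A) :=
  A.finite_spectrum.continuousOn f

lemma exists_le_algebraMap {A : Matrix n n ℝ} (hA : IsSelfAdjoint A) :
    ∃ c : ℝ, 0 < c ∧ A ≤ algebraMap ℝ _ c := by
  obtain ⟨c, hc⟩ := A.finite_spectrum.bddAbove
  exact ⟨max c 1, by positivity,
    le_algebraMap_of_spectrum_le fun t ht => (hc ht).trans (le_max_left _ _)⟩

/-- As `0⁻¹ = 0`, this inverts the nonzero eigenvalues and keeps the kernel: for self-adjoint `A`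
it is the Moore–Penrose pseudo-inverse. -/
noncomputable def pinv (A : Matrix n n ℝ) : Matrix n n ℝ := cfc (fun x : ℝ => x⁻¹) A

noncomputable def kerProj (A : Matrix n n ℝ) : Matrix n n ℝ := 1 - A * A.pinv

variable {A : Matrix n n ℝ}

lemma isSelfAdjoint_pinv (A : Matrix n n ℝ) : IsSelfAdjoint A.pinv := cfc_predicate _ A

lemma commute_pinv (hA : IsSelfAdjoint A) : Commute A A.pinv := by
  have h := cfc_commute_cfc (fun x : ℝ => x) (fun x : ℝ => x⁻¹) A
  rwa [cfc_id' ℝ A] at h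

lemma mul_pinv_mul_self (hA : IsSelfAdjoint A) : A * A.pinv * A = A := by
  have hc := continuousOn_spectrum A
  calc A * A.pinv * A = cfc (fun x : ℝ => x * x⁻¹ * x) A := by
        rw [cfc_mul _ _ A (hc _) (hc _), cfc_mul _ _ A (hc _) (hc _), cfc_id' ℝ A, pinv]
    _ = A := by rw [cfc_congr fun x _ => mul_inv_mul_cancel x, cfc_id' ℝ A]

lemma pinv_mul_self_mul_pinv (hA : IsSelfAdjoint A) : A.pinv * A * A.pinv = A.pinv := by
  have hc := continuousOn_spectrum A
  calc A.pinv * A * A.pinv = cfc (fun x : ℝ => x⁻¹ * x * x⁻¹) A := by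
        rw [cfc_mul _ _ A (hc _) (hc _), cfc_mul _ _ A (hc _) (hc _), cfc_id' ℝ A, pinv]
    _ = A.pinv := cfc_congr fun x _ => by simpa using mul_inv_mul_cancel x⁻¹

lemma PosSemidef.pinv (hA : A.PosSemidef) : A.pinv.PosSemidef := by
  rw [← nonneg_iff_posSemidef] at hA ⊢
  exact cfc_nonneg fun x hx => inv_nonneg.2 (spectrum_nonneg_of_nonneg hA hx)

lemma mul_kerProj (hA : IsSelfAdjoint A) : A * A.kerProj = 0 := by
  rw [kerProj, mul_sub, mul_one, ← mul_assoc, mul_assoc, (commute_pinv hA).eq, ← mul_assoc,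
    mul_pinv_mul_self hA, sub_self]

lemma kerProj_mul (hA : IsSelfAdjoint A) : A.kerProj * A = 0 := by
  rw [kerProj, sub_mul, one_mul, mul_pinv_mul_self hA, sub_self]

lemma pinv_mul_kerProj (hA : IsSelfAdjoint A) : A.pinv * A.kerProj = 0 := by
  rw [kerProj, mul_sub, mul_one, ← mul_assoc, pinv_mul_self_mul_pinv hA, sub_self]

lemma isSelfAdjoint_kerProj (hA : IsSelfAdjoint A) : IsSelfAdjoint A.kerProj := by
  rw [IsSelfAdjoint, kerProj, star_sub, star_one, star_mul, (isSelfAdjoint_pinv A).star_eq,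
    hA.star_eq, (commute_pinv hA).eq]

lemma kerProj_mul_self (hA : IsSelfAdjoint A) : A.kerProj * A.kerProj = A.kerProj := by
  nth_rewrite 1 [kerProj]
  rw [sub_mul, one_mul, mul_assoc, pinv_mul_kerProj hA, mul_zero, sub_zero]

lemma posSemidef_kerProj (hA : IsSelfAdjoint A) : A.kerProj.PosSemidef := by
  have hE : A.kerProjᴴ = A.kerProj := isSelfAdjoint_kerProj hA
  simpa only [hE, kerProj_mul_self hA] using posSemidef_conjTranspose_mul_self A.kerProj

lemma mul_pinv_add_smul_kerProj_mul (hA : IsSelfAdjoint A) (ε : ℝ) :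
    A * (A.pinv + ε • A.kerProj) * A = A := by
  rw [mul_add, add_mul, mul_smul_comm, smul_mul_assoc, mul_kerProj hA, zero_mul, smul_zero,
    add_zero, mul_pinv_mul_self hA]

lemma PosSemidef.posDef_pinv_add_smul_kerProj (hA : A.PosSemidef) {ε : ℝ} (hε : 0 < ε) :
    (A.pinv + ε • A.kerProj).PosDef := by
  have hA' : IsSelfAdjoint A := hA.isHermitian
  refine ((hA.pinv.add ((posSemidef_kerProj hA').smul hε.le)).posDef_iff_isUnit).2 <|
    (isUnit_iff_isUnit_det _).2 <| isUnit_det_of_right_inverse (B := A + ε⁻¹ • A.kerProj) ?_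
  rw [add_mul, mul_add, mul_add, mul_smul_comm, pinv_mul_kerProj hA', smul_mul_assoc,
    kerProj_mul hA', smul_mul_assoc, mul_smul_comm, kerProj_mul_self hA', smul_smul,
    mul_inv_cancel₀ hε.ne', one_smul, smul_zero, smul_zero, add_zero, zero_add, kerProj,
    ← (commute_pinv hA').eq, add_sub_cancel]

lemma exists_eq_mulVec_of_forall_le (hA : A.IsSymm) {w : n → ℝ} {b : ℝ}
    (h : ∀ s, 2 * (w ⬝ᵥ s) - s ⬝ᵥ A *ᵥ s ≤ b) : ∃ a, w = A *ᵥ a ∧ a ⬝ᵥ A *ᵥ a ≤ b := by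
  have hA' : IsSelfAdjoint A := isHermitian_iff_isSymm.2 hA
  set p := A.kerProj *ᵥ w
  have hAp : A *ᵥ p = 0 := by rw [mulVec_mulVec, mul_kerProj hA', zero_mulVec]
  have hwp : w ⬝ᵥ p = 0 := by
    by_contra hwp
    have := h (((b + 1) / (2 * (w ⬝ᵥ p))) • p)
    rw [mulVec_smul, hAp, smul_zero, dotProduct_zero, dotProduct_smul, smul_eq_mul] at this
    field_simp at this
    linarith
  have hp : p = 0 := by
    have hE : A.kerProj.IsSymm := isHermitian_iff_isSymm.1 (isSelfAdjoint_kerProj hA')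
    have hEp : A.kerProj *ᵥ p = p := by rw [mulVec_mulVec, kerProj_mul_self hA']
    rw [← dotProduct_self_eq_zero]
    calc p ⬝ᵥ p = w ⬝ᵥ A.kerProj *ᵥ p := hE.dotProduct_mulVec_comm_s10 p w
      _ = 0 := by rw [hEp, hwp]
  set a := A.pinv *ᵥ w
  have hw : w = A *ᵥ a := by
    rw [mulVec_mulVec, ← sub_eq_zero, ← hp]
    simp only [p, kerProj, sub_mulVec, one_mulVec]
  refine ⟨a, hw, ?_⟩
  have := h a
  rw [hw, dotProduct_comm (A *ᵥ a)] at this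
  linarith

theorem star_mul_self_le_smul_pinv_add_smul_kerProj {N B : Matrix n n ℝ} (hN : IsSelfAdjoint N)
    (hB : IsSelfAdjoint B) (hBB : B * B = N) (X : Matrix n n ℝ) {a c δ : ℝ} (hδ : 0 < δ)
    (ha : star (X * B) * (X * B) ≤ algebraMap ℝ _ a) (hc : star X * X ≤ algebraMap ℝ _ c) :
    star X * X ≤ ((1 + δ) * a) • N.pinv + ((1 + δ⁻¹) * c) • N.kerProj := by
  have hrange : star (X * B * (B * N.pinv)) * (X * B * (B * N.pinv)) ≤ a • N.pinv :=
    calc star (X * B * (B * N.pinv)) * (X * B * (B * N.pinv))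
        = star (B * N.pinv) * (star (X * B) * (X * B)) * (B * N.pinv) := by
          rw [star_mul (X * B)]; simp only [mul_assoc]
      _ ≤ star (B * N.pinv) * algebraMap ℝ _ a * (B * N.pinv) :=
          star_left_conjugate_le_conjugate ha _
      _ = a • N.pinv := by
          rw [Algebra.algebraMap_eq_smul_one, mul_smul_comm, mul_one, smul_mul_assoc, star_mul,
            hB.star_eq, (isSelfAdjoint_pinv N).star_eq, mul_assoc, ← mul_assoc B, hBB, ← mul_assoc,
            pinv_mul_self_mul_pinv hN]
  have hker : star (X * N.kerProj) * (X * N.kerProj) ≤ c • N.kerProj :=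
    calc star (X * N.kerProj) * (X * N.kerProj)
        = star N.kerProj * (star X * X) * N.kerProj := by rw [star_mul X]; simp only [mul_assoc]
      _ ≤ star N.kerProj * algebraMap ℝ _ c * N.kerProj := star_left_conjugate_le_conjugate hc _
      _ = c • N.kerProj := by
          rw [Algebra.algebraMap_eq_smul_one, mul_smul_comm, mul_one, smul_mul_assoc,
            (isSelfAdjoint_kerProj hN).star_eq, kerProj_mul_self hN]
  have hsplit : X * B * (B * N.pinv) + X * N.kerProj = X := by
    rw [mul_assoc, ← mul_assoc B, hBB, ← mul_add, kerProj, add_sub_cancel, mul_one]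
  calc star X * X = star (X * B * (B * N.pinv) + X * N.kerProj) *
        (X * B * (B * N.pinv) + X * N.kerProj) := by rw [hsplit]
    _ ≤ (1 + δ) • (star (X * B * (B * N.pinv)) * (X * B * (B * N.pinv))) +
        (1 + δ⁻¹) • (star (X * N.kerProj) * (X * N.kerProj)) := star_add_mul_add_le hδ _ _
    _ ≤ (1 + δ) • (a • N.pinv) + (1 + δ⁻¹) • (c • N.kerProj) := by gcongr
    _ = ((1 + δ) * a) • N.pinv + ((1 + δ⁻¹) * c) • N.kerProj := by rw [smul_smul, smul_smul]

theorem exists_inv_mul_mul_inv_le [Nonempty n] {N K : Matrix n n ℝ} (hN : N.PosSemidef)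
    (hK : IsSelfAdjoint K) {ρ : ℝ} (hρ : ∀ t ∈ spectrum ℝ (K⁻¹ * N), |t| < ρ) :
    ∃ ε : ℝ, 0 < ε ∧ K⁻¹ * N * K⁻¹ ≤ ρ ^ 2 • (N.pinv + ε • N.kerProj) := by
  set B := CFC.sqrt N
  have hB : IsSelfAdjoint B := IsSelfAdjoint.of_nonneg (CFC.sqrt_nonneg N)
  have hBB : B * B = N := CFC.sqrt_mul_sqrt_self N hN.nonneg
  have hJ : IsSelfAdjoint K⁻¹ := IsHermitian.inv hK
  have hC : IsSelfAdjoint (B * K⁻¹ * B) := by simpa only [hB.star_eq] using hJ.conjugate B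
  have hσC : spectrum ℝ (B * K⁻¹ * B) = spectrum ℝ (K⁻¹ * N) := by
    rw [mul_assoc, spectrum_mul_comm, mul_assoc, hBB]
  obtain ⟨t₀, ht₀, hmax⟩ := Set.exists_max_image _ (fun t => |t|) (finite_spectrum _)
    (ContinuousFunctionalCalculus.spectrum_nonempty _ hC)
  have hCC : star (B * K⁻¹ * B) * (B * K⁻¹ * B) ≤ algebraMap ℝ _ (|t₀| ^ 2) := by
    rw [hC.star_eq]
    exact mul_self_le_algebraMap_of_abs_le hC hmax
  have hρ₀ : |t₀| < ρ := hρ t₀ (hσC ▸ ht₀)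
  have hρ : 0 < ρ := (abs_nonneg t₀).trans_lt hρ₀
  obtain ⟨δ, hδ, hδρ⟩ := exists_pos_one_add_mul_sq_le (abs_nonneg t₀) hρ₀
  obtain ⟨c, hc, hXX⟩ := exists_le_algebraMap (IsSelfAdjoint.star_mul_self (B * K⁻¹))
  refine ⟨(1 + δ⁻¹) * c / ρ ^ 2, by positivity, ?_⟩
  have hJNJ : K⁻¹ * N * K⁻¹ = star (B * K⁻¹) * (B * K⁻¹) := by
    rw [star_mul, hB.star_eq, hJ.star_eq, ← hBB]; simp only [mul_assoc]
  calc K⁻¹ * N * K⁻¹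
      ≤ ((1 + δ) * |t₀| ^ 2) • N.pinv + ((1 + δ⁻¹) * c) • N.kerProj := hJNJ ▸
        star_mul_self_le_smul_pinv_add_smul_kerProj hN.isHermitian hB hBB _ hδ hCC hXX
    _ ≤ ρ ^ 2 • (N.pinv + ((1 + δ⁻¹) * c / ρ ^ 2) • N.kerProj) := by
        rw [smul_add, smul_smul, mul_div_cancel₀ _ (by positivity)]
        exact add_le_add_left (smul_le_smul_of_nonneg_right hδρ hN.pinv.nonneg) _

lemma inv_mulVec_dotProduct_mul_mul_mulVec {K : Matrix n n ℝ} (hK : IsUnit K) (hKs : K.IsSymm)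
    (Q : Matrix n n ℝ) (y : n → ℝ) :
    (K⁻¹ *ᵥ y) ⬝ᵥ (K * Q * K) *ᵥ (K⁻¹ *ᵥ y) = y ⬝ᵥ Q *ᵥ y := by
  rw [show K * Q * K = Kᵀ * Q * K by rw [hKs.eq], dotProduct_transpose_mul_mul_mulVec,
    mulVec_mulVec, mul_nonsing_inv K ((isUnit_iff_isUnit_det K).1 hK), one_mulVec]

lemma le_mul_mul_of_inv_mul_mul_inv_le {K N X : Matrix n n ℝ} (hK : IsUnit K)
    (hKs : IsSelfAdjoint K) (h : K⁻¹ * N * K⁻¹ ≤ X) : N ≤ K * X * K := by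
  have hKdet := (isUnit_iff_isUnit_det K).1 hK
  have hKNK : K * (K⁻¹ * N * K⁻¹) * K = N := by
    calc K * (K⁻¹ * N * K⁻¹) * K = K * K⁻¹ * N * (K⁻¹ * K) := by simp only [mul_assoc]
      _ = N := by rw [mul_nonsing_inv K hKdet, nonsing_inv_mul K hKdet, one_mul, mul_one]
  simpa only [hKs.star_eq, hKNK] using star_left_conjugate_le_conjugate h K

theorem exists_posDef_contraction {M L : Matrix n n ℝ} (hM : M.IsSymm) (hL : L.IsSymm)
    (hLM : (L - M).PosSemidef) (hK : IsUnit (M + L)) {ρ : ℝ}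
    (hρ : ∀ t ∈ spectrum ℝ ((M + L)⁻¹ * (L - M)), |t| < ρ) :
    ∃ P : Matrix n n ℝ, P.PosDef ∧ ∀ u g : n → ℝ,
      (∀ s, 2 * ((g - M *ᵥ u) ⬝ᵥ s) - s ⬝ᵥ (L - M) *ᵥ s ≤ (g - M *ᵥ u) ⬝ᵥ u) →
      (u - (2 : ℝ) • (M + L)⁻¹ *ᵥ g) ⬝ᵥ P *ᵥ (u - (2 : ℝ) • (M + L)⁻¹ *ᵥ g) ≤
        ρ ^ 2 * (u ⬝ᵥ P *ᵥ u) := by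
  rcases isEmpty_or_nonempty n with hn | hn
  · exact ⟨1, PosDef.one, fun u g _ => by simp [Subsingleton.elim u 0]⟩
  set K := M + L
  set N := L - M
  have hKs : K.IsSymm := hM.add hL
  have hNs : N.IsSymm := hL.sub hM
  have hKs' : IsSelfAdjoint K := isHermitian_iff_isSymm.2 hKs
  obtain ⟨ε, hε, hbound⟩ := exists_inv_mul_mul_inv_le hLM hKs' hρ
  set Q := N.pinv + ε • N.kerProj
  refine ⟨K * Q * K, ?_, fun u g hg => ?_⟩
  · simpa only [show Kᴴ = K from hKs'] using (hLM.posDef_pinv_add_smul_kerProj hε)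
      |>.conjTranspose_mul_mul_same (mulVec_injective_iff_isUnit.2 hK)
  obtain ⟨a, ha, haN⟩ := exists_eq_mulVec_of_forall_le hNs hg
  have hφ : u - (2 : ℝ) • K⁻¹ *ᵥ g = K⁻¹ *ᵥ (N *ᵥ (u - (2 : ℝ) • a)) := by
    have : N *ᵥ (u - (2 : ℝ) • a) = K *ᵥ u - (2 : ℝ) • g := by
      rw [eq_add_of_sub_eq ha]
      simp only [K, N, mulVec_sub, mulVec_smul, add_mulVec, sub_mulVec, smul_add, smul_sub]
      module
    rw [this, mulVec_sub, mulVec_mulVec, nonsing_inv_mul K ((isUnit_iff_isUnit_det K).1 hK),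
      one_mulVec, mulVec_smul]
  rw [ha, dotProduct_comm (N *ᵥ a) u] at haN
  calc (u - (2 : ℝ) • K⁻¹ *ᵥ g) ⬝ᵥ (K * Q * K) *ᵥ (u - (2 : ℝ) • K⁻¹ *ᵥ g)
      = (u - (2 : ℝ) • a) ⬝ᵥ (Nᵀ * Q * N) *ᵥ (u - (2 : ℝ) • a) := by
        rw [hφ, inv_mulVec_dotProduct_mul_mul_mulVec hK hKs, dotProduct_transpose_mul_mul_mulVec]
    _ ≤ u ⬝ᵥ N *ᵥ u := by
        rw [hNs.eq, mul_pinv_add_smul_kerProj_mul hLM.isHermitian]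
        exact hNs.dotProduct_mulVec_sub_two_smul_le haN
    _ ≤ ρ ^ 2 * (u ⬝ᵥ (K * Q * K) *ᵥ u) := by
        simpa only [mul_smul_comm, smul_mul_assoc, smul_mulVec, dotProduct_smul, smul_eq_mul] using
          dotProduct_mulVec_le_of_le (le_mul_mul_of_inv_mul_mul_inv_le hK hKs' hbound) u

end Matrix

lemma SClass.two_mul_dotProduct_sub_le {ι : Type*} [Fintype ι] [DecidableEq ι]
    {M L : Matrix ι ι ℝ} (hM : M.IsSymm) {f : (ι → ℝ) → ℝ} (hf : SClass M L f) (z₁ z₂ s : ι → ℝ) :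
    2 * ((grad f z₁ - grad f z₂ - M *ᵥ (z₁ - z₂)) ⬝ᵥ s) - s ⬝ᵥ (L - M) *ᵥ s ≤
      (grad f z₁ - grad f z₂ - M *ᵥ (z₁ - z₂)) ⬝ᵥ (z₁ - z₂) := by
  have h₁ := (hf.2 z₁ (z₁ - s)).2
  have h₂ := (hf.2 z₂ (z₁ - s)).1
  have h₃ := (hf.2 z₂ (z₂ + s)).2
  have h₄ := (hf.2 z₁ (z₂ + s)).1
  rw [sub_sub_cancel_left] at h₁
  rw [sub_right_comm] at h₂
  rw [add_sub_cancel_left] at h₃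
  rw [show z₂ + s - z₁ = s - (z₁ - z₂) by abel] at h₄
  set u := z₁ - z₂
  have := hM.dotProduct_mulVec_comm_s10 u s
  simp only [mulVec_sub, mulVec_neg, dotProduct_sub, sub_dotProduct, dotProduct_neg, neg_dotProduct,
    neg_neg, sub_mulVec] at h₁ h₂ h₃ h₄ ⊢
  linarith [dotProduct_comm (M *ᵥ u) s, dotProduct_comm (M *ᵥ u) u]

theorem stmt_10_general {d : ℕ} (M L : Matrix (Fin d) (Fin d) ℝ)
    (hM : M.IsSymm) (hL : L.IsSymm) (hLinv : IsUnit L)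
    (hLM : (L - M).PosSemidef) (hcong : CongruentMat M L) :
    IsUnit (M + L) ∧
      ∀ ρ : ℝ,
        (∀ μ ∈ spectrum ℂ (((M + L)⁻¹ * (L - M)).map (Complex.ofReal : ℝ → ℂ)), ‖μ‖ < ρ) →
        ∃ P : Matrix (Fin d) (Fin d) ℝ, P.PosDef ∧
          ∀ f : (Fin d → ℝ) → ℝ, SClass M L f →
            ∀ z₁ z₂ : Fin d → ℝ,
              ((z₁ - (2 : ℝ) • (M + L)⁻¹.mulVec (grad f z₁)) -
               (z₂ - (2 : ℝ) • (M + L)⁻¹.mulVec (grad f z₂))) ⬝ᵥ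
                P.mulVec ((z₁ - (2 : ℝ) • (M + L)⁻¹.mulVec (grad f z₁)) -
                  (z₂ - (2 : ℝ) • (M + L)⁻¹.mulVec (grad f z₂)))
                ≤ ρ ^ 2 * ((z₁ - z₂) ⬝ᵥ P.mulVec (z₁ - z₂)) := by
  obtain ⟨T, hT, hTML⟩ := hcong
  have hK : IsUnit (M + L) :=
    isUnit_add_of_congruent hM hL hLinv hLM (mulVec_injective_iff_isUnit.2 hT) hTML
  refine ⟨hK, fun ρ hρ => ?_⟩
  obtain ⟨P, hP, hPφ⟩ := exists_posDef_contraction hM hL hLM hK fun t ht => by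
    simpa using hρ _ (ofReal_mem_spectrum_map ht)
  refine ⟨P, hP, fun f hf z₁ z₂ => ?_⟩
  rw [sub_sub_sub_comm, ← smul_sub, ← mulVec_sub]
  exact hPφ _ _ (hf.two_mul_dotProduct_sub_le hM z₁ z₂)

theorem stmt_10 {d : ℕ} (M L : Matrix (Fin d) (Fin d) ℝ)
    (hM : M.IsSymm) (hL : L.IsSymm) (hMinv : IsUnit M) (hLinv : IsUnit L)
    (hLM : (L - M).PosSemidef) (hcong : CongruentMat M L) :
    IsUnit (M + L) ∧
      ∀ ρ : ℝ,
        (∀ μ ∈ spectrum ℂ (((M + L)⁻¹ * (L - M)).map (Complex.ofReal : ℝ → ℂ)), ‖μ‖ < ρ) →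
        ∃ P : Matrix (Fin d) (Fin d) ℝ, P.PosDef ∧
          ∀ f : (Fin d → ℝ) → ℝ, SClass M L f →
            ∀ z₁ z₂ : Fin d → ℝ,
              ((z₁ - (2 : ℝ) • (M + L)⁻¹.mulVec (grad f z₁)) -
               (z₂ - (2 : ℝ) • (M + L)⁻¹.mulVec (grad f z₂))) ⬝ᵥ
                P.mulVec ((z₁ - (2 : ℝ) • (M + L)⁻¹.mulVec (grad f z₁)) -
                  (z₂ - (2 : ℝ) • (M + L)⁻¹.mulVec (grad f z₂)))
                ≤ ρ ^ 2 * ((z₁ - z₂) ⬝ᵥ P.mulVec (z₁ - z₂)) :=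
  stmt_10_general M L hM hL hLinv hLM hcong
end
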